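/- Let I ⊆ S be a homogeneous ideal such that S/I is a Gorenstein Artin k-algebra of socle degree ν, and let ω : S_ν → k be a k-linear functional whose kernel is exactly I_ν = I ∩ S_ν. Define f ∈ D to be the homogeneous polynomial of degree ν obtained by applying ω to the coefficients (in the x-variables) of (x_1z_1 + … + x_nz_n)^ν; explicitly, f = Σ_{c_1+…+c_n=ν} (ν! / (c_1!⋯c_n!)) ω(x_1^{c_1}⋯x_n^{c_n}) z_1^{c_1}⋯z_n^{c_n}. Then f ≠ 0 and f^⊥ = I; that is, f is a homogeneous Macaulay inverse system of S/I. -/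

import Mathlib

open MvPolynomial
open scoped Nat
set_option synthInstance.maxHeartbeats 1000000
set_option maxHeartbeats 1000000


/-- The operator `∂^m = ∏ᵢ (∂/∂zᵢ)^{mᵢ}` on `k[z_1,…,z_n]`. -/
noncomputable def monDiff (k : Type*) [CommRing k] {n : ℕ} (m : Fin n →₀ ℕ) :
    Module.End k (MvPolynomial (Fin n) k) :=
  (List.ofFn fun i : Fin n =>
    ((MvPolynomial.pderiv i).toLinearMap : Module.End k (MvPolynomial (Fin n) k)) ^ (m i)).prod

/-- The apolarity action: `apolar g f = g(∂/∂z_1,…,∂/∂z_n) f`. -/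
noncomputable def apolar {k : Type*} [CommRing k] {n : ℕ}
    (g f : MvPolynomial (Fin n) k) : MvPolynomial (Fin n) k :=
  ∑ m ∈ g.support, g.coeff m • (monDiff k m f)

/-- The socle of `A` relative to an ideal `P` (for us, the irrelevant maximal ideal
`A₊`): `Soc(A) = {a ∈ A : a ⬝ P = 0}`, a `k`-submodule of `A`. -/
def socle (k : Type*) {A : Type*} [CommRing k] [CommRing A] [Algebra k A] (P : Ideal A) :
    Submodule k A where
  carrier := {x | ∀ y ∈ P, x * y = 0}
  add_mem' := by
    intro a b ha hb y hy
    rw [add_mul, ha y hy, hb y hy, add_zero]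
  zero_mem' := by
    intro y hy
    rw [zero_mul]
  smul_mem' := by
    intro c x hx y hy
    rw [Algebra.smul_def, mul_assoc, hx y hy, mul_zero]

section AutoHelpers

variable {k : Type*} [CommRing k] {n ν : ℕ}

lemma degree_eq_sum_univ (d : Fin n →₀ ℕ) : d.degree = ∑ i, d i :=
  Finset.sum_subset (Finset.subset_univ _)
    (fun i _ hi => Finsupp.notMem_support_iff.mp hi)

lemma pderiv_pow_monomial (i : Fin n) (e : ℕ) (d : Fin n →₀ ℕ) (a : k) :
    (((pderiv i).toLinearMap : Module.End k (MvPolynomial (Fin n) k)) ^ e) (monomial d a)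
      = monomial (d - Finsupp.single i e) (((d i).descFactorial e : ℕ) * a) := by
  induction e with
  | zero => simp
  | succ e ih =>
    rw [pow_succ', Module.End.mul_apply, ih]
    show pderiv i _ = _
    rw [pderiv_monomial]
    have h1 : d - Finsupp.single i e - Finsupp.single i 1 = d - Finsupp.single i (e + 1) := by
      rw [tsub_tsub, ← Finsupp.single_add]
    have h2 : (d - Finsupp.single i e) i = d i - e := by
      simp [Finsupp.tsub_apply]
    rw [h1, h2, Nat.descFactorial_succ]
    push_cast
    ring

lemma listProd_pderiv_monomial {N : ℕ} (ι : Fin N → Fin n) (hι : Function.Injective ι)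
    (e : Fin N → ℕ) (d : Fin n →₀ ℕ) (a : k) :
    ((List.ofFn fun j : Fin N =>
        ((pderiv (ι j)).toLinearMap : Module.End k (MvPolynomial (Fin n) k)) ^ (e j)).prod)
        (monomial d a)
      = monomial (d - ∑ j : Fin N, Finsupp.single (ι j) (e j))
          ((∏ j : Fin N, (d (ι j)).descFactorial (e j) : ℕ) * a) := by
  induction N with
  | zero => simp
  | succ N ih =>
    rw [List.ofFn_succ, List.prod_cons, Module.End.mul_apply,
      ih (fun j => ι j.succ) (hι.comp (Fin.succ_injective N)) (fun j => e j.succ),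
      pderiv_pow_monomial]
    have hS : (∑ j : Fin N, Finsupp.single (ι j.succ) (e j.succ)) (ι 0) = 0 := by
      rw [Finsupp.finset_sum_apply]
      apply Finset.sum_eq_zero
      intro j _
      exact Finsupp.single_eq_of_ne (fun h => (Fin.succ_ne_zero j) (hι h.symm))
    congr 1
    · rw [tsub_tsub, Fin.sum_univ_succ, add_comm]
    · have h2 : (d - ∑ j : Fin N, Finsupp.single (ι j.succ) (e j.succ)) (ι 0) = d (ι 0) := by
        rw [Finsupp.tsub_apply, hS, Nat.sub_zero]
      rw [h2, Fin.prod_univ_succ]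
      push_cast
      ring

lemma monDiff_monomial (m d : Fin n →₀ ℕ) (a : k) :
    monDiff k m (monomial d a)
      = monomial (d - m) ((∏ i, (d i).descFactorial (m i) : ℕ) * a) := by
  have h := listProd_pderiv_monomial (k := k) (n := n) id Function.injective_id
    (fun i => m i) d a
  simpa [monDiff, Finsupp.univ_sum_single] using h

lemma nat_key (d m : Fin n →₀ ℕ) (h : d.degree + m.degree = ν) :
    (∏ i, ((d + m) i).descFactorial (m i)) * Nat.multinomial Finset.univ ⇑(d + m)
      = ν.descFactorial m.degree * Nat.multinomial Finset.univ ⇑d := by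
  have hQ : 0 < ∏ i, (d i)! := Finset.prod_pos fun _ _ => Nat.factorial_pos _
  apply Nat.eq_of_mul_eq_mul_left hQ
  have hsum : ∑ i, (d + m) i = ν := by
    simp only [Finsupp.add_apply, Finset.sum_add_distrib]
    rw [← degree_eq_sum_univ, ← degree_eq_sum_univ]
    exact h
  have hdle : m.degree ≤ ν := by omega
  calc (∏ i, (d i)!) *
      ((∏ i, ((d + m) i).descFactorial (m i)) * Nat.multinomial Finset.univ ⇑(d + m))
      = ((∏ i, (d i)! * ((d + m) i).descFactorial (m i))) *
          Nat.multinomial Finset.univ ⇑(d + m) := by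
        rw [Finset.prod_mul_distrib, mul_assoc]
    _ = (∏ i, ((d + m) i)!) * Nat.multinomial Finset.univ ⇑(d + m) := by
        congr 1
        refine Finset.prod_congr rfl fun i _ => ?_
        have h1 : (d + m) i - m i = d i := by simp
        calc (d i)! * ((d + m) i).descFactorial (m i)
            = ((d + m) i - m i)! * ((d + m) i).descFactorial (m i) := by rw [h1]
          _ = ((d + m) i)! := Nat.factorial_mul_descFactorial (by simp)
    _ = (∑ i, (d + m) i)! := Nat.multinomial_spec _ _
    _ = ν ! := by rw [hsum]
    _ = (ν - m.degree)! * ν.descFactorial m.degree :=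
        (Nat.factorial_mul_descFactorial hdle).symm
    _ = (∑ i, d i)! * ν.descFactorial m.degree := by
        congr 2
        rw [← degree_eq_sum_univ]; omega
    _ = ((∏ i, (d i)!) * Nat.multinomial Finset.univ ⇑d) * ν.descFactorial m.degree := by
        rw [Nat.multinomial_spec]
    _ = (∏ i, (d i)!) * (ν.descFactorial m.degree * Nat.multinomial Finset.univ ⇑d) := by
        ring

noncomputable def assocForm (ν : ℕ) {k : Type*} [CommRing k] {n : ℕ}
    (ω : MvPolynomial (Fin n) k →ₗ[k] k) : MvPolynomial (Fin n) k :=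
  ∑ c ∈ Finset.Nat.antidiagonalTuple n ν,
    monomial (Finsupp.equivFunOnFinite.symm c)
      ((Nat.multinomial Finset.univ c : k) *
        ω (monomial (Finsupp.equivFunOnFinite.symm c) 1))

lemma coeff_monDiff_assocForm (ω : MvPolynomial (Fin n) k →ₗ[k] k) (m d : Fin n →₀ ℕ) :
    coeff d (monDiff k m (assocForm ν ω)) =
      if m.degree + d.degree = ν then
        ((∏ i, ((d + m) i).descFactorial (m i) : ℕ) : k) *
          ((Nat.multinomial Finset.univ ⇑(d + m) : k) * ω (monomial (d + m) 1))
      else 0 := by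
  classical
  rw [assocForm, map_sum]
  rw [MvPolynomial.coeff_sum]
  simp_rw [monDiff_monomial, coeff_monomial]
  have hco : ∀ c : Fin n → ℕ, ∀ i : Fin n, (Finsupp.equivFunOnFinite.symm c) i = c i :=
    fun c i => rfl
  by_cases h : m.degree + d.degree = ν
  · rw [if_pos h]
    have hmem : ⇑(d + m) ∈ Finset.Nat.antidiagonalTuple n ν := by
      rw [Finset.Nat.mem_antidiagonalTuple]
      simp only [Finsupp.add_apply, Finset.sum_add_distrib]
      rw [← degree_eq_sum_univ, ← degree_eq_sum_univ]
      omega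
    rw [Finset.sum_eq_single_of_mem _ hmem]
    · rw [Finsupp.equivFunOnFinite_symm_coe, if_pos (add_tsub_cancel_right d m)]
    · intro c _ hne
      by_cases hcm : Finsupp.equivFunOnFinite.symm c - m = d
      · rw [if_pos hcm]
        have hnle : ¬ m ≤ Finsupp.equivFunOnFinite.symm c := by
          intro hle
          apply hne
          have hc : Finsupp.equivFunOnFinite.symm c = d + m := by
            rw [← hcm]; exact (tsub_add_cancel_of_le hle).symm
          have := congrArg Finsupp.equivFunOnFinite hc
          rwa [Equiv.apply_symm_apply] at this
        obtain ⟨i, hi⟩ : ∃ i, (Finsupp.equivFunOnFinite.symm c) i < m i := by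
          by_contra hall
          push_neg at hall
          exact hnle (Finsupp.le_def.mpr hall)
        rw [Finset.prod_eq_zero (Finset.mem_univ i) (Nat.descFactorial_of_lt hi)]
        simp
      · rw [if_neg hcm]
  · rw [if_neg h]
    apply Finset.sum_eq_zero
    intro c hc
    by_cases hcm : Finsupp.equivFunOnFinite.symm c - m = d
    · by_cases hle : m ≤ Finsupp.equivFunOnFinite.symm c
      · exfalso
        apply h
        have hc' := Finset.Nat.mem_antidiagonalTuple.mp hc
        have hceq : Finsupp.equivFunOnFinite.symm c = d + m := by
          rw [← hcm]; exact (tsub_add_cancel_of_le hle).symm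
        have : ∑ i, c i = d.degree + m.degree := by
          calc ∑ i, c i = ∑ i, (Finsupp.equivFunOnFinite.symm c) i := by
                refine Finset.sum_congr rfl fun i _ => (hco c i).symm
            _ = ∑ i, (d + m) i := by rw [hceq]
            _ = d.degree + m.degree := by
                simp only [Finsupp.add_apply, Finset.sum_add_distrib]
                rw [← degree_eq_sum_univ, ← degree_eq_sum_univ]
        omega
      · rw [if_pos hcm]
        obtain ⟨i, hi⟩ : ∃ i, (Finsupp.equivFunOnFinite.symm c) i < m i := by
          by_contra hall
          push_neg at hall
          exact hle (Finsupp.le_def.mpr hall)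
        rw [Finset.prod_eq_zero (Finset.mem_univ i) (Nat.descFactorial_of_lt hi)]
        simp
    · rw [if_neg hcm]

lemma coeff_apolar_zero (ω : MvPolynomial (Fin n) k →ₗ[k] k) (g : MvPolynomial (Fin n) k)
    (d : Fin n →₀ ℕ) (hd : ν < d.degree) :
    coeff d (apolar g (assocForm ν ω)) = 0 := by
  rw [apolar, MvPolynomial.coeff_sum]
  simp_rw [coeff_smul, smul_eq_mul, coeff_monDiff_assocForm]
  apply Finset.sum_eq_zero
  intro m _
  rw [if_neg (by omega), mul_zero]

lemma coeff_apolar (ω : MvPolynomial (Fin n) k →ₗ[k] k) (g : MvPolynomial (Fin n) k)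
    (d : Fin n →₀ ℕ) (hd : d.degree ≤ ν) :
    coeff d (apolar g (assocForm ν ω)) =
      ((ν.descFactorial (ν - d.degree) * Nat.multinomial Finset.univ ⇑d : ℕ) : k) *
        ω (monomial d 1 * homogeneousComponent (ν - d.degree) g) := by
  classical
  rw [apolar, MvPolynomial.coeff_sum]
  simp_rw [coeff_smul, smul_eq_mul, coeff_monDiff_assocForm]
  have hstep : ∀ m ∈ g.support,
      g.coeff m *
        (if m.degree + d.degree = ν then
          ((∏ i, ((d + m) i).descFactorial (m i) : ℕ) : k) *
            ((Nat.multinomial Finset.univ ⇑(d + m) : k) * ω (monomial (d + m) 1))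
        else 0)
      = (if m.degree = ν - d.degree then
          ((ν.descFactorial (ν - d.degree) * Nat.multinomial Finset.univ ⇑d : ℕ) : k) *
            (g.coeff m * ω (monomial (d + m) 1)) else 0) := by
    intro m _
    by_cases hm : m.degree = ν - d.degree
    · rw [if_pos (by omega), if_pos hm]
      have hk := nat_key (ν := ν) d m (by omega)
      rw [hm] at hk
      calc g.coeff m * (((∏ i, ((d + m) i).descFactorial (m i) : ℕ) : k) *
              ((Nat.multinomial Finset.univ ⇑(d + m) : k) * ω (monomial (d + m) 1)))
          = (((∏ i, ((d + m) i).descFactorial (m i)) *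
              Nat.multinomial Finset.univ ⇑(d + m) : ℕ) : k) *
              (g.coeff m * ω (monomial (d + m) 1)) := by push_cast; ring
        _ = _ := by rw [hk]
    · rw [if_neg (by omega), if_neg hm, mul_zero]
  rw [Finset.sum_congr rfl hstep]
  rw [homogeneousComponent_apply, Finset.mul_sum, map_sum, Finset.mul_sum]
  rw [← Finset.sum_filter]
  refine Finset.sum_congr rfl fun m hm => ?_
  have h1 : monomial d (1 : k) * monomial m (coeff m g) = monomial (d + m) (coeff m g) := by
    rw [monomial_mul, one_mul]
  rw [h1]
  have h2 : monomial (d + m) (coeff m g) = coeff m g • monomial (d + m) (1 : k) := by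
    rw [smul_monomial, smul_eq_mul, mul_one]
  rw [h2, map_smul, smul_eq_mul]

lemma degree_add' (a b : Fin n →₀ ℕ) : (a + b).degree = a.degree + b.degree := by
  simp only [degree_eq_sum_univ, Finsupp.add_apply, Finset.sum_add_distrib]

lemma degree_single' (i : Fin n) (c : ℕ) : (Finsupp.single i c).degree = c := by
  simp [degree_eq_sum_univ, Finsupp.single_apply]

section Gor

variable {K : Type*} [Field K] {n ν : ℕ}

lemma socle_mem (I : Ideal (MvPolynomial (Fin n) K)) (z : MvPolynomial (Fin n) K)
    (hz : ∀ i, z * X i ∈ I) :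
    Ideal.Quotient.mk I z ∈ socle K (Ideal.map (Ideal.Quotient.mk I)
      (Ideal.span (Set.range (X : Fin n → MvPolynomial (Fin n) K)))) := by
  intro y hy
  obtain ⟨w, hw, rfl⟩ :=
    (Ideal.mem_map_iff_of_surjective _ Ideal.Quotient.mk_surjective).1 hy
  rw [← map_mul, Ideal.Quotient.eq_zero_iff_mem]
  refine Submodule.span_induction ?_ ?_ ?_ ?_ hw
  · rintro _ ⟨i, rfl⟩
    exact hz i
  · simpa using I.zero_mem
  · intro a b _ _ ha hb
    rw [mul_add]
    exact I.add_mem ha hb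
  · intro a b _ hb
    rw [smul_eq_mul]
    have hab : z * (a * b) = a * (z * b) := by ring
    rw [hab]
    exact I.mul_mem_left a hb

lemma gorenstein_step (I : Ideal (MvPolynomial (Fin n) K))
    (hIhom : ∀ g ∈ I, ∀ j : ℕ, homogeneousComponent j g ∈ I)
    (hIν : ∃ p : MvPolynomial (Fin n) K, p.IsHomogeneous ν ∧ p ∉ I)
    (hIvan : ∀ p : MvPolynomial (Fin n) K, ∀ j : ℕ, ν < j → p.IsHomogeneous j → p ∈ I)
    (hIsoc : Module.finrank K
      (socle K (Ideal.map (Ideal.Quotient.mk I)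
        (Ideal.span (Set.range (X : Fin n → MvPolynomial (Fin n) K))))) = 1)
    (j : ℕ) (h : MvPolynomial (Fin n) K) (hhom : h.IsHomogeneous j)
    (hall : ∀ d : Fin n →₀ ℕ, d.degree = ν - j → monomial d 1 * h ∈ I) :
    h ∈ I := by
  classical
  by_contra hh
  obtain ⟨p, hphom, hpI⟩ := hIν
  set P : ℕ → Prop := fun t => ∃ e : Fin n →₀ ℕ, e.degree = t ∧ monomial e 1 * h ∉ I with hP
  have hP0 : P 0 := ⟨0, by simp, by simpa using hh⟩
  set t := Nat.findGreatest P ν with ht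
  have htP : P t := Nat.findGreatest_spec (Nat.zero_le ν) hP0
  obtain ⟨e, he, hz⟩ := htP
  set z := monomial e (1 : K) * h with hzdef
  have hzhom : z.IsHomogeneous (e.degree + j) :=
    (isHomogeneous_monomial (1 : K) rfl).mul hhom
  rw [he] at hzhom
  have hnp : ∀ e' : Fin n →₀ ℕ, e'.degree = t + 1 → monomial e' 1 * h ∈ I := by
    intro e' he'
    by_cases hc : t + 1 + j ≤ ν
    · by_contra hne
      exact Nat.findGreatest_is_greatest (P := P) (n := ν) (k := t + 1)
        (by omega) (by omega) ⟨e', he', hne⟩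
    · exact hIvan _ (t + 1 + j) (by omega)
        ((isHomogeneous_monomial (1 : K) he').mul hhom)
  -- every X i kills z mod I
  have hXz : ∀ i, z * X i ∈ I := by
    intro i
    have heq : z * X i = monomial (e + Finsupp.single i 1) 1 * h := by
      rw [hzdef, X, mul_comm _ ((monomial (Finsupp.single i 1)) (1:K)), ← mul_assoc,
        monomial_mul, one_mul, add_comm (Finsupp.single i 1) e]
    rw [heq]
    exact hnp _ (by rw [degree_add', degree_single', he])
  -- X i kills p mod I
  have hXp : ∀ i, p * X i ∈ I := fun i =>
    hIvan _ (ν + 1) (by omega) (hphom.mul (isHomogeneous_X K i))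
  have hzsoc := socle_mem I z hXz
  have hpsoc := socle_mem I p hXp
  have hz0 : Ideal.Quotient.mk I z ≠ 0 := by
    rw [ne_eq, Ideal.Quotient.eq_zero_iff_mem]; exact hz
  have hp0 : Ideal.Quotient.mk I p ≠ 0 := by
    rw [ne_eq, Ideal.Quotient.eq_zero_iff_mem]; exact hpI
  set v : socle K (Ideal.map (Ideal.Quotient.mk I)
      (Ideal.span (Set.range (X : Fin n → MvPolynomial (Fin n) K)))) := ⟨_, hpsoc⟩ with hv
  have hvne : v ≠ 0 := by
    intro hc
    exact hp0 (congrArg Subtype.val hc)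
  obtain ⟨c, hc⟩ := (finrank_eq_one_iff_of_nonzero' v hvne).1 hIsoc ⟨_, hzsoc⟩
  have hc' : c • Ideal.Quotient.mk I p = Ideal.Quotient.mk I z := by
    simpa using congrArg Subtype.val hc
  have hsub : z - C c * p ∈ I := by
    have hmk : Ideal.Quotient.mk I (z - C c * p) = 0 := by
      have hCp : Ideal.Quotient.mk I (C c * p) = c • Ideal.Quotient.mk I p := by
        rw [map_mul, show (C c : MvPolynomial (Fin n) K) = algebraMap K _ c from rfl,
          Ideal.Quotient.mk_algebraMap, ← Algebra.smul_def]
      rw [map_sub, sub_eq_zero, hCp, hc']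
    exact Ideal.Quotient.eq_zero_iff_mem.1 hmk
  have hcomp := hIhom _ hsub (t + j)
  rw [map_sub] at hcomp
  have hzc : homogeneousComponent (t + j) z = z := by
    rw [homogeneousComponent_of_mem ((mem_homogeneousSubmodule _ _).2 hzhom), if_pos rfl]
  by_cases hν : t + j = ν
  · -- then e itself is a witness contradicting hall
    exact hz (hall e (by omega))
  · have hpc : homogeneousComponent (t + j) (C c * p) = 0 := by
      rw [homogeneousComponent_C_mul,
        homogeneousComponent_of_mem ((mem_homogeneousSubmodule _ _).2 hphom),
        if_neg hν, mul_zero]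
    rw [hzc, hpc, sub_zero] at hcomp
    exact hz hcomp

end Gor

end AutoHelpers

/-- The associated form of a Gorenstein Artin algebra `S/I` of socle degree `ν`: if
`ω : S_ν → k` is a linear functional with kernel exactly `I_ν`, then
`f = ω((x_1z_1+⋯+x_nz_n)^ν) = Σ (ν!/(c_1!⋯c_n!)) ω(x^c) z^c` is nonzero and satisfies
`f^⊥ = I`, i.e. `f` is a homogeneous Macaulay inverse system of `S/I`. -/
theorem stmt18 {k : Type*} [Field k] [CharZero k] {n ν : ℕ}
    (I : Ideal (MvPolynomial (Fin n) k))
    (hIhom : ∀ g ∈ I, ∀ j : ℕ, homogeneousComponent j g ∈ I)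
    (hIfin : Module.Finite k (MvPolynomial (Fin n) k ⧸ I))
    (hIν : ∃ p : MvPolynomial (Fin n) k, p.IsHomogeneous ν ∧ p ∉ I)
    (hIvan : ∀ p : MvPolynomial (Fin n) k, ∀ j : ℕ, ν < j → p.IsHomogeneous j → p ∈ I)
    (hIsoc : Module.finrank k
      (socle k (Ideal.map (Ideal.Quotient.mk I)
        (Ideal.span (Set.range (X : Fin n → MvPolynomial (Fin n) k))))) = 1)
    (ω : MvPolynomial (Fin n) k →ₗ[k] k)
    (hker : ∀ p : MvPolynomial (Fin n) k, p.IsHomogeneous ν → (ω p = 0 ↔ p ∈ I)) :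
    (∑ c ∈ Finset.Nat.antidiagonalTuple n ν,
        monomial (Finsupp.equivFunOnFinite.symm c)
          ((Nat.multinomial Finset.univ c : k) *
            ω (monomial (Finsupp.equivFunOnFinite.symm c) 1))) ≠ 0 ∧
    ∀ g : MvPolynomial (Fin n) k,
      apolar g (∑ c ∈ Finset.Nat.antidiagonalTuple n ν,
        monomial (Finsupp.equivFunOnFinite.symm c)
          ((Nat.multinomial Finset.univ c : k) *
            ω (monomial (Finsupp.equivFunOnFinite.symm c) 1))) = 0 ↔ g ∈ I := by
  classical
  have hFdef : (∑ c ∈ Finset.Nat.antidiagonalTuple n ν,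
      monomial (Finsupp.equivFunOnFinite.symm c)
        ((Nat.multinomial Finset.univ c : k) *
          ω (monomial (Finsupp.equivFunOnFinite.symm c) 1))) = assocForm ν ω := rfl
  rw [hFdef]
  have hmain : ∀ g : MvPolynomial (Fin n) k, apolar g (assocForm ν ω) = 0 ↔ g ∈ I := by
    intro g
    constructor
    · intro h0
      have hcomp : ∀ j : ℕ, homogeneousComponent j g ∈ I := by
        intro j
        by_cases hj : j ≤ ν
        · refine gorenstein_step I hIhom hIν hIvan hIsoc j _
            (homogeneousComponent_isHomogeneous j g) ?_
          intro d hd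
          have hdle : d.degree ≤ ν := by omega
          have hcoeff : coeff d (apolar g (assocForm ν ω)) = 0 := by
            rw [h0, coeff_zero]
          rw [coeff_apolar ω g d hdle] at hcoeff
          have hj' : ν - d.degree = j := by omega
          rw [hj'] at hcoeff
          have hC : ((ν.descFactorial j * Nat.multinomial Finset.univ ⇑d : ℕ) : k) ≠ 0 := by
            rw [Nat.cast_ne_zero]
            refine Nat.mul_ne_zero ?_ (Nat.multinomial_pos _ _).ne'
            intro hzero
            rw [Nat.descFactorial_eq_zero_iff_lt] at hzero
            omega
          have hω : ω (monomial d 1 * homogeneousComponent j g) = 0 :=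
            (mul_eq_zero.mp hcoeff).resolve_left hC
          have hhom : (monomial d (1 : k) * homogeneousComponent j g).IsHomogeneous ν := by
            have := (isHomogeneous_monomial (d := d) (1 : k) rfl).mul
              (homogeneousComponent_isHomogeneous j g)
            rwa [show d.degree + j = ν by omega] at this
          exact (hker _ hhom).mp hω
        · exact hIvan _ j (by omega) (homogeneousComponent_isHomogeneous j g)
      have hsum := MvPolynomial.sum_homogeneousComponent g
      rw [← hsum]
      exact Ideal.sum_mem I fun i _ => hcomp i
    · intro hg
      apply MvPolynomial.ext
      intro d
      rw [coeff_zero]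
      by_cases hdle : d.degree ≤ ν
      · rw [coeff_apolar ω g d hdle]
        have hmem : monomial d (1 : k) * homogeneousComponent (ν - d.degree) g ∈ I :=
          I.mul_mem_left _ (hIhom g hg _)
        have hhom : (monomial d (1 : k) *
            homogeneousComponent (ν - d.degree) g).IsHomogeneous ν := by
          have := (isHomogeneous_monomial (d := d) (1 : k) rfl).mul
            (homogeneousComponent_isHomogeneous (ν - d.degree) g)
          rwa [show d.degree + (ν - d.degree) = ν by omega] at this
        rw [(hker _ hhom).mpr hmem, mul_zero]
      · exact coeff_apolar_zero ω g d (by omega)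
  refine ⟨?_, hmain⟩
  intro hF0
  obtain ⟨p, hphom, hpI⟩ := hIν
  apply hpI
  rw [← hmain p, hF0]
  simp [apolar]
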